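/- arXiv:1505.07619 — 2 statements merged into one kernel-verified Lean document; each statement's English description precedes it below -/
import Mathlib

section
/- Let n ≥ 3 and let α = α_i + α_{i+1} = e_i − e_{i+2} be a positive root of height 2 in A_{n−1} (1 ≤ i ≤ n−2). If w ∈ S_n is such that w·(−3α) = w(−3α+ρ) − ρ is dominant, then n = 3, α = α_1 + α_2, w·(−3α) = α_1 + α_2 = (1,0,−1), and ℓ(w) = 3. -/
/-- ρ = (n−1, n−2, …, 1, 0) for type A_{n−1} realized in ℤ^n. -/
def weylRho (n : ℕ) : Fin n → ℤ := fun i => (n : ℤ) - 1 - (i : ℕ)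

/-- The action of `w ∈ S_n` on weights: `w(λ)_i = λ_{w⁻¹(i)}`. -/
def wAct {n : ℕ} (w : Equiv.Perm (Fin n)) (lam : Fin n → ℤ) : Fin n → ℤ :=
  fun i => lam (w⁻¹ i)

/-- The dot action `w·λ = w(λ+ρ) − ρ`. -/
def dotAct {n : ℕ} (w : Equiv.Perm (Fin n)) (lam : Fin n → ℤ) : Fin n → ℤ :=
  fun i => lam (w⁻¹ i) + weylRho n (w⁻¹ i) - weylRho n i

/-- `λ` is dominant iff `λ_1 ≥ λ_2 ≥ ⋯ ≥ λ_n`. -/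
def IsDominant {n : ℕ} (lam : Fin n → ℤ) : Prop :=
  ∀ i j : Fin n, i ≤ j → lam j ≤ lam i

/-- The root `e_i − e_j`. -/
def posRoot {n : ℕ} (i j : Fin n) : Fin n → ℤ :=
  fun k => (if k = i then 1 else 0) - (if k = j then 1 else 0)

/-- Positive roots of A_{n−1}: `e_i − e_j` with `i < j`. -/
def IsPosRoot {n : ℕ} (x : Fin n → ℤ) : Prop :=
  ∃ i j : Fin n, i < j ∧ x = posRoot i j

/-- Negative roots of A_{n−1}. -/
def IsNegRoot {n : ℕ} (x : Fin n → ℤ) : Prop :=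
  ∃ i j : Fin n, i < j ∧ x = -(posRoot i j)

/-- The length ℓ(w): the number of positive roots sent to negative roots by `w`,
i.e. the number of inversions of `w`. -/
def weylLen {n : ℕ} (w : Equiv.Perm (Fin n)) : ℕ :=
  (Finset.univ.filter (fun p : Fin n × Fin n => p.1 < p.2 ∧ w p.2 < w p.1)).card

/-!
If `w·λ` is dominant, then `w(λ + ρ) = w·λ + ρ` is strictly decreasing, so `λ + ρ` has distinct
entries. For `λ = -3(e_i - e_{i+2})` the entries of `λ + ρ` are those of `ρ` except
`ρ_i - 3 = ρ_{i+3}` and `ρ_{i+2} + 3 = ρ_{i-1}`; these repeat an entry of `ρ` unless `i = 0` and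
`n = 3`. In `S_3` a direct check leaves only the longest element `w₀`, which swaps `e_1` and
`e_3`.
-/

section

variable {n : ℕ}

lemma weylRho_strictAnti : StrictAnti (weylRho n) := fun j k hjk => by
  have : (j : ℕ) < k := hjk
  simp only [weylRho]
  omega

lemma IsDominant.add_weylRho_strictAnti {lam : Fin n → ℤ} (h : IsDominant lam) :
    StrictAnti (lam + weylRho n) := fun _ _ hjk =>
  add_lt_add_of_le_of_lt (h _ _ hjk.le) (weylRho_strictAnti hjk)

lemma dotAct_add_weylRho (w : Equiv.Perm (Fin n)) (lam : Fin n → ℤ) :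
    dotAct w lam + weylRho n = wAct w (lam + weylRho n) := by
  funext k
  simp [dotAct, wAct]

lemma add_weylRho_injective_of_isDominant_dotAct {w : Equiv.Perm (Fin n)} {lam : Fin n → ℤ}
    (h : IsDominant (dotAct w lam)) : Function.Injective (lam + weylRho n) := by
  have hinj := h.add_weylRho_strictAnti.injective
  rw [dotAct_add_weylRho] at hinj
  intro p q hpq
  apply w.injective
  apply hinj
  simpa [wAct] using hpq

lemma neg_three_posRoot_add_weylRho_apply_eq_of_add_one {a b c : Fin n} (hab : (b : ℕ) = a + 2)
    (hca : (c : ℕ) + 1 = a) :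
    (-(3 • posRoot a b) + weylRho n) c = (-(3 • posRoot a b) + weylRho n) b := by
  simp only [Pi.add_apply, Pi.neg_apply, nsmul_eq_mul, Pi.mul_apply, Nat.cast_ofNat, Pi.ofNat_apply,
    posRoot, weylRho, Fin.ext_iff]
  split_ifs <;> omega

lemma neg_three_posRoot_add_weylRho_apply_eq_of_add_three {a b c : Fin n} (hab : (b : ℕ) = a + 2)
    (hac : (c : ℕ) = a + 3) :
    (-(3 • posRoot a b) + weylRho n) a = (-(3 • posRoot a b) + weylRho n) c := by
  simp only [Pi.add_apply, Pi.neg_apply, nsmul_eq_mul, Pi.mul_apply, Nat.cast_ofNat, Pi.ofNat_apply,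
    posRoot, weylRho, Fin.ext_iff]
  split_ifs <;> omega

end

lemma eq_swap_of_isDominant_dotAct_neg_three_posRoot (w : Equiv.Perm (Fin 3))
    (h : IsDominant (dotAct w (-(3 • posRoot 0 2)))) : w = Equiv.swap 0 2 := by
  revert w
  unfold IsDominant dotAct weylRho posRoot
  decide

lemma dotAct_swap_neg_three_posRoot :
    dotAct (Equiv.swap 0 2) (-(3 • posRoot (0 : Fin 3) 2)) = posRoot 0 2 := by
  decide

/-- For a height-two positive root α = e_i − e_{i+2} of A_{n−1}, if w·(−3α) is dominant
then n = 3, α = α₁ + α₂, w·(−3α) = α₁ + α₂, and ℓ(w) = 3. -/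
theorem dot_neg_three_height_two_root (n : ℕ) (i : ℕ) (hi : i + 2 < n)
    (w : Equiv.Perm (Fin n))
    (hdom : IsDominant (dotAct w (-(3 • posRoot (⟨i, by omega⟩ : Fin n) (⟨i + 2, hi⟩ : Fin n))))) :
    n = 3 ∧ i = 0 ∧
    dotAct w (-(3 • posRoot (⟨i, by omega⟩ : Fin n) (⟨i + 2, hi⟩ : Fin n))) =
      posRoot (⟨0, by omega⟩ : Fin n) (⟨2, by omega⟩ : Fin n) ∧
    weylLen w = 3 := by
  have hreg := add_weylRho_injective_of_isDominant_dotAct hdom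
  have hi0 : i = 0 := by
    by_contra hi0
    have := hreg (neg_three_posRoot_add_weylRho_apply_eq_of_add_one (c := ⟨i - 1, by omega⟩) rfl
      (Nat.sub_add_cancel (by omega)))
    simp only [Fin.mk.injEq] at this
    omega
  subst hi0
  have hn : n = 3 := by
    by_contra hn
    have := hreg (neg_three_posRoot_add_weylRho_apply_eq_of_add_three (c := ⟨3, by omega⟩) rfl rfl)
    simp only [Fin.mk.injEq] at this
    omega
  subst hn
  obtain rfl := eq_swap_of_isDominant_dotAct_neg_three_posRoot w hdom
  exact ⟨rfl, rfl, dotAct_swap_neg_three_posRoot, by decide⟩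
end

section
/- Let n = 3 and let α, β, γ be positive roots of A_2 (repetitions allowed). If w ∈ S_3 is such that μ = w·(−α−β−γ) = w(−α−β−γ+ρ) − ρ is dominant and nonzero, then μ ∈ {α_1+α_2, 2α_1+α_2, α_1+2α_2} = {(1,0,−1), (2,−1,−1), (1,1,−2)} and ℓ(w) ∈ {2,3}; moreover if ℓ(w) = 3 then μ = α_1+α_2 = (1,0,−1). -/
instance {n : ℕ} (lam : Fin n → ℤ) : Decidable (IsDominant lam) := by
  unfold IsDominant; infer_instance

set_option synthInstance.maxSize 2000 in
set_option synthInstance.maxHeartbeats 2000000 in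
set_option maxHeartbeats 4000000 in
/-- For n = 3: if α, β, γ are positive roots of A₂ and μ = w·(−α−β−γ) is dominant
and nonzero, then μ ∈ {(1,0,−1), (2,−1,−1), (1,1,−2)} and ℓ(w) ∈ {2,3};
moreover ℓ(w) = 3 forces μ = (1,0,−1). -/
theorem dot_neg_three_roots_A2 (α β γ : Fin 3 → ℤ)
    (hα : IsPosRoot α) (hβ : IsPosRoot β) (hγ : IsPosRoot γ) (w : Equiv.Perm (Fin 3))
    (hdom : IsDominant (dotAct w (-α - β - γ)))
    (hnz : dotAct w (-α - β - γ) ≠ 0) :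
    (dotAct w (-α - β - γ) = ![1, 0, -1] ∨
      dotAct w (-α - β - γ) = ![2, -1, -1] ∨
      dotAct w (-α - β - γ) = ![1, 1, -2]) ∧
    (weylLen w = 2 ∨ weylLen w = 3) ∧
    (weylLen w = 3 → dotAct w (-α - β - γ) = ![1, 0, -1]) := by
  obtain ⟨i1, j1, h1, rfl⟩ := hα
  obtain ⟨i2, j2, h2, rfl⟩ := hβ
  obtain ⟨i3, j3, h3, rfl⟩ := hγ
  revert h1 h2 h3 hdom hnz
  revert w i1 j1 i2 j2 i3 j3
  decide
end
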